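/- Let ω_a, ω_c ∈ (0, π/36] and let a₁, c, a₂ be the developed images (in ℝ²) of the corresponding vertices of the convex cap under a cut-path of type (a₁, c, a₂, …). Let x = (ω_a·a₁ + ω_c·c)/(ω_a + ω_c). Then the angle at a₂ between the direction toward c and the tangent at a₂ to the circle centered at x through a₂ is bounded below by a constant (depending only on the triangle geometry) that exceeds π/6; in particular, for the configuration where a₁, a₂, a₃ form an equilateral triangle of side s and c is its centroid, this angle exceeds π/6 uniformly as ω_a, ω_c → 0. -/

import Mathlib

open Complex InnerProductGeometry
open scoped InnerProductSpace
set_option maxHeartbeats 1000000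

private lemma aux_angle_lt (u w : ℂ) (hu : 0 < ‖u‖) (hw : 0 < ‖w‖)
    (h : ⟪u, w⟫_ℝ ^ 2 < 3 / 4 * (‖u‖ ^ 2 * ‖w‖ ^ 2)) :
    Real.pi / 6 < angle u w := by
  by_contra h'
  push_neg at h'
  have hM : 0 < ‖u‖ * ‖w‖ := mul_pos hu hw
  have hcos : Real.cos (angle u w) = ⟪u, w⟫_ℝ / (‖u‖ * ‖w‖) :=
    InnerProductGeometry.cos_angle u w
  have hle : Real.cos (Real.pi / 6) ≤ Real.cos (angle u w) :=
    Real.cos_le_cos_of_nonneg_of_le_pi (InnerProductGeometry.angle_nonneg u w)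
      (by linarith [Real.pi_pos]) h'
  rw [Real.cos_pi_div_six, hcos, le_div_iff₀ hM] at hle
  have h3 : (Real.sqrt 3) ^ 2 = 3 := Real.sq_sqrt (by norm_num)
  have h3' : 0 < Real.sqrt 3 := Real.sqrt_pos.2 (by norm_num)
  have hpos : (0 : ℝ) ≤ Real.sqrt 3 / 2 * (‖u‖ * ‖w‖) := by positivity
  have h2 : (Real.sqrt 3 / 2 * (‖u‖ * ‖w‖)) * (Real.sqrt 3 / 2 * (‖u‖ * ‖w‖)) ≤
      ⟪u, w⟫_ℝ * ⟪u, w⟫_ℝ := mul_le_mul hle hle hpos (hpos.trans hle)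
  have h4 : (Real.sqrt 3 / 2 * (‖u‖ * ‖w‖)) ^ 2 = 3 / 4 * (‖u‖ ^ 2 * ‖w‖ ^ 2) := by
    rw [mul_pow, div_pow, h3]; ring
  nlinarith [h2, h4, h]

private lemma sq_norm_complex (z : ℂ) : ‖z‖ ^ 2 = z.re ^ 2 + z.im ^ 2 := by
  rw [Complex.sq_norm, Complex.normSq_apply]; ring

private lemma main_aux (s ωa ωc : ℝ) (hs : 0 < s) (hωa : 0 < ωa) (hωc : 0 < ωc)
    (A B u V : ℂ)
    (hnA : Complex.normSq A = s ^ 2) (hnB : Complex.normSq B = s ^ 2)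
    (hnAB : Complex.normSq (A - B) = s ^ 2)
    (hu : u = (((1 : ℝ) / 3 : ℝ) : ℂ) * (A + B))
    (hV : V = -(((ωa + ωc / 3 : ℝ)) : ℂ) * A - (((ωc / 3 : ℝ)) : ℂ) * B) :
    Real.pi / 6 < angle u (Complex.I * V) ∧
      Real.pi / 6 < angle u (-(Complex.I * V)) := by
  rw [Complex.normSq_apply] at hnA hnB hnAB
  simp only [Complex.sub_re, Complex.sub_im] at hnAB
  have hdot : A.re * B.re + A.im * B.im = s ^ 2 / 2 := by
    linear_combination (hnA + hnB - hnAB) / 2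
  have hcross : (A.re * B.im - A.im * B.re) ^ 2 = 3 * s ^ 4 / 4 := by
    linear_combination (B.re ^ 2 + B.im ^ 2) * hnA + s ^ 2 * hnB -
      (A.re * B.re + A.im * B.im + s ^ 2 / 2) * hdot
  have hinner : ⟪u, Complex.I * V⟫_ℝ = ωa / 3 * (A.im * B.re - A.re * B.im) := by
    rw [hu, hV, Complex.inner]
    simp only [map_mul, map_add, map_sub, map_neg, Complex.conj_ofReal,
      Complex.mul_re, Complex.mul_im, Complex.add_re, Complex.add_im,
      Complex.sub_re, Complex.sub_im, Complex.neg_re, Complex.neg_im,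
      Complex.I_re, Complex.I_im, Complex.ofReal_re, Complex.ofReal_im,
      Complex.conj_re, Complex.conj_im]
    ring
  have hinner' : ⟪u, -(Complex.I * V)⟫_ℝ = -(ωa / 3 * (A.im * B.re - A.re * B.im)) := by
    rw [inner_neg_right, hinner]
  have hnu : ‖u‖ ^ 2 = s ^ 2 / 3 := by
    rw [sq_norm_complex, hu]
    simp only [Complex.mul_re, Complex.mul_im, Complex.add_re, Complex.add_im,
      Complex.ofReal_re, Complex.ofReal_im]
    linear_combination hnA / 9 + hnB / 9 + 2 / 9 * hdot
  have hnV : ‖Complex.I * V‖ ^ 2 =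
      s ^ 2 * ((ωa + ωc / 3) ^ 2 + (ωc / 3) ^ 2 + (ωa + ωc / 3) * (ωc / 3)) := by
    rw [sq_norm_complex, hV]
    simp only [Complex.mul_re, Complex.mul_im, Complex.add_re, Complex.add_im,
      Complex.sub_re, Complex.sub_im, Complex.neg_re, Complex.neg_im,
      Complex.I_re, Complex.I_im, Complex.ofReal_re, Complex.ofReal_im]
    linear_combination (ωa + ωc / 3) ^ 2 * hnA + (ωc / 3) ^ 2 * hnB +
      2 * (ωa + ωc / 3) * (ωc / 3) * hdot
  have hnV' : ‖-(Complex.I * V)‖ ^ 2 = ‖Complex.I * V‖ ^ 2 := by rw [norm_neg]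
  have hu0 : 0 < ‖u‖ := by nlinarith [norm_nonneg u, hnu, mul_pos hs hs]
  have hw0 : 0 < ‖Complex.I * V‖ := by
    nlinarith [norm_nonneg (Complex.I * V), hnV, mul_pos hs hs, mul_pos hωa hωa,
      mul_pos hωa hωc, mul_pos hωc hωc, mul_pos (mul_pos hs hs) (mul_pos hωa hωa)]
  have hkey : (ωa / 3 * (A.im * B.re - A.re * B.im)) ^ 2 <
      3 / 4 * (‖u‖ ^ 2 * ‖Complex.I * V‖ ^ 2) := by
    have hc2 : (ωa / 3 * (A.im * B.re - A.re * B.im)) ^ 2 = ωa ^ 2 / 9 * (3 * s ^ 4 / 4) := by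
      rw [mul_pow]
      have : (A.im * B.re - A.re * B.im) ^ 2 = 3 * s ^ 4 / 4 := by linear_combination hcross
      rw [this]; ring
    rw [hnu, hnV, hc2]
    nlinarith [mul_pos (pow_pos hs 4) (mul_pos hωa hωa),
      mul_pos (pow_pos hs 4) (mul_pos hωa hωc),
      mul_pos (pow_pos hs 4) (mul_pos hωc hωc)]
  constructor
  · exact aux_angle_lt u _ hu0 hw0 (by rw [hinner]; exact hkey)
  · refine aux_angle_lt u _ hu0 (by rw [norm_neg]; exact hw0) ?_
    rw [hinner', hnV', neg_pow]
    simpa using hkey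

/-- Let `a 0, a 1, a 2` be the vertices of an equilateral
triangle with side `s > 0` and `c` its centroid (in the paper's notation
`a₁ = a 0`, `a₂ = a 1`).  For curvatures `ω_a, ω_c ∈ (0, π/36]`, let
`x = (ω_a·a₁ + ω_c·c)/(ω_a + ω_c)` be the weighted center (lying on the
segment `[c, a₁]`).  Then the (unsigned) angle at `a₂` between the direction
toward `c` and the tangent line at `a₂` to the circle centered at `x` through
`a₂` (the tangent being perpendicular to `a₂ − x`; we take the nearer of the
two tangent directions) exceeds `π/6`, uniformly for all such `ω_a, ω_c`. -/
theorem angle_at_a2_exceeds_pi_div_six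
    (s : ℝ) (hs : 0 < s) (a : Fin 3 → ℂ)
    (ha : ∀ i j, i ≠ j → dist (a i) (a j) = s)
    (c : ℂ) (hc : c = (a 0 + a 1 + a 2) / 3)
    (ωa ωc : ℝ) (hωa : 0 < ωa) (hωa' : ωa ≤ Real.pi / 36)
    (hωc : 0 < ωc) (hωc' : ωc ≤ Real.pi / 36)
    (x : ℂ) (hx : x = ((ωa : ℂ) * a 0 + (ωc : ℂ) * c) / ((ωa : ℂ) + (ωc : ℂ))) :
    Real.pi / 6 <
      min (angle (c - a 1) (Complex.I * (a 1 - x)))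
          (angle (c - a 1) (-(Complex.I * (a 1 - x)))) := by
  have hW : (0 : ℝ) < ωa + ωc := by linarith
  have hWc : ((ωa : ℂ) + (ωc : ℂ)) ≠ 0 := by
    have : ((ωa + ωc : ℝ) : ℂ) ≠ 0 := Complex.ofReal_ne_zero.2 hW.ne'
    push_cast at this; exact this
  set A := a 0 - a 1 with hA
  set B := a 2 - a 1 with hB
  have hnA : Complex.normSq A = s ^ 2 := by
    rw [← Complex.sq_norm, ← Complex.dist_eq, ha 0 1 (by decide)]
  have hnB : Complex.normSq B = s ^ 2 := by
    rw [← Complex.sq_norm, ← Complex.dist_eq, ha 2 1 (by decide)]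
  have hnAB : Complex.normSq (A - B) = s ^ 2 := by
    have : A - B = a 0 - a 2 := by rw [hA, hB]; ring
    rw [this, ← Complex.sq_norm, ← Complex.dist_eq, ha 0 2 (by decide)]
  have hu : c - a 1 = (((1 : ℝ) / 3 : ℝ) : ℂ) * (A + B) := by
    rw [hc, hA, hB]; push_cast; ring
  set V := ((ωa : ℂ) + (ωc : ℂ)) * (a 1 - x) with hVdef
  have hV : V = -(((ωa + ωc / 3 : ℝ)) : ℂ) * A - (((ωc / 3 : ℝ)) : ℂ) * B := by
    rw [hVdef, hx, hc, hA, hB]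
    field_simp
    push_cast
    ring
  have hmain := main_aux s ωa ωc hs hωa hωc A B (c - a 1) V hnA hnB hnAB hu hV
  have hsmul : Complex.I * (a 1 - x) = ((ωa + ωc)⁻¹ : ℝ) • (Complex.I * V) := by
    rw [hVdef, Complex.real_smul]
    push_cast
    field_simp
  have h1 : angle (c - a 1) (Complex.I * (a 1 - x)) = angle (c - a 1) (Complex.I * V) := by
    rw [hsmul, angle_smul_right_of_pos _ _ (inv_pos.2 hW)]
  have h2 : angle (c - a 1) (-(Complex.I * (a 1 - x))) =
      angle (c - a 1) (-(Complex.I * V)) := by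
    rw [hsmul, ← smul_neg, angle_smul_right_of_pos _ _ (inv_pos.2 hW)]
  rw [h1, h2]
  exact lt_min hmain.1 hmain.2
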